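/- Let (Ω, 𝓕, P) be a probability space carrying real random variables Y, Y', Y'', τ, T, T' such that: Y' and Y'' each have the same distribution as Y; the random variables Y', Y'', τ, T, T' are mutually independent; τ is uniformly distributed on [0,1]; T and T' are exponentially distributed with rate 2 (mean 1/2); Y is square-integrable; and Y has the same distribution as τ²·Y' + (1−τ)²·Y'' + (1/2)τ²·T + (1/2)(1−τ)²·T' − τ(1−τ). Then E[Y] = 0 and Var(Y) = 1/16. -/

import Mathlib

/-!
Taking expectations in the fixed-point equation, with `E τ² = E (1 - τ)² = 1/3` and `E T = 1/2`,
gives `E Y = (2/3) E Y`, so `E Y = 0`. Writing `T = 1/2 + S` and `T' = 1/2 + S'`, the right-hand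
side becomes `d(τ) + τ² Y' + (1 - τ)² Y'' + (τ²/2) S + ((1 - τ)²/2) S'` with
`d(τ) = τ²/4 + (1 - τ)²/4 - τ (1 - τ)`. As `Y', Y'', S, S'` are centred and independent of each
other and of `τ`, these five terms are orthogonal in `L²`, so `s = E Y²` satisfies
`s = E d(τ)² + (E τ⁴ + E (1 - τ)⁴) (s + Var T / 4) = 1/80 + (2/5) (s + 1/16)`, i.e. `s = 1/16`.
-/

open MeasureTheory ProbabilityTheory Real Set
open scoped Nat ENNReal

section Orthogonality

variable {Ω ι : Type*} [MeasurableSpace Ω] {μ : Measure Ω}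

lemma ProbabilityTheory.IndepFun.memLp_two_mul {X Y : Ω → ℝ} (hXY : IndepFun X Y μ)
    (hX : MemLp X 2 μ) (hY : MemLp Y 2 μ) : MemLp (fun ω => X ω * Y ω) 2 μ := by
  have hsq : IndepFun (fun ω => X ω ^ 2) (fun ω => Y ω ^ 2) μ :=
    hXY.comp (measurable_id.pow_const 2) (measurable_id.pow_const 2)
  refine (memLp_two_iff_integrable_sq (hX.1.mul hY.1)).2 ?_
  simpa only [Pi.mul_def, mul_pow] using hsq.integrable_mul hX.integrable_sq hY.integrable_sq

lemma integral_sq_sum_of_orthogonal {u : ι → Ω → ℝ} {s : Finset ι}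
    (hu : ∀ i ∈ s, MemLp (u i) 2 μ)
    (horth : ∀ i ∈ s, ∀ j ∈ s, i ≠ j → ∫ ω, u i ω * u j ω ∂μ = 0) :
    ∫ ω, (∑ i ∈ s, u i ω) ^ 2 ∂μ = ∑ i ∈ s, ∫ ω, u i ω ^ 2 ∂μ := by
  have hint : ∀ i ∈ s, ∀ j ∈ s, Integrable (fun ω => u i ω * u j ω) μ :=
    fun i hi j hj => (hu i hi).integrable_mul (hu j hj)
  simp_rw [sq, Finset.sum_mul_sum]
  rw [integral_finsetSum _ fun i hi => integrable_finsetSum _ (hint i hi)]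
  refine Finset.sum_congr rfl fun i hi => ?_
  rw [integral_finsetSum _ (hint i hi),
    Finset.sum_eq_single_of_mem i hi fun j hj hji => horth i hi j hj hji.symm]

lemma integral_add_sq_of_integral_mul_eq_zero {v w : Ω → ℝ} (hv : MemLp v 2 μ)
    (hw : MemLp w 2 μ) (hvw : ∫ ω, v ω * w ω ∂μ = 0) :
    ∫ ω, (v ω + w ω) ^ 2 ∂μ = ∫ ω, v ω ^ 2 ∂μ + ∫ ω, w ω ^ 2 ∂μ := by
  have hvw2 : Integrable (fun ω => 2 * (v ω * w ω)) μ := (hv.integrable_mul hw).const_mul 2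
  have h12 : Integrable (fun ω => v ω ^ 2 + 2 * (v ω * w ω)) μ := hv.integrable_sq.add hvw2
  simp_rw [add_sq, mul_assoc]
  rw [integral_add h12 hw.integrable_sq, integral_add hv.integrable_sq hvw2, integral_const_mul,
    hvw, mul_zero, add_zero]

variable {τ : Ω → ℝ} {X : ι → Ω → ℝ} {s : Finset ι} {g : ι → ℝ → ℝ} {h : ℝ → ℝ}

lemma integral_add_sum_mul_of_indepFun (hτX : ∀ i ∈ s, IndepFun τ (X i) μ)
    (hg : ∀ i ∈ s, Measurable (g i)) (hgτ : ∀ i ∈ s, Integrable (fun ω => g i (τ ω)) μ)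
    (hX : ∀ i ∈ s, Integrable (X i) μ) (hhτ : Integrable (fun ω => h (τ ω)) μ) :
    ∫ ω, (h (τ ω) + ∑ i ∈ s, g i (τ ω) * X i ω) ∂μ =
      ∫ ω, h (τ ω) ∂μ +
        ∑ i ∈ s, (∫ ω, g i (τ ω) ∂μ) * ∫ ω, X i ω ∂μ := by
  have hind : ∀ i ∈ s, IndepFun (fun ω => g i (τ ω)) (X i) μ :=
    fun i hi => (hτX i hi).comp (hg i hi) measurable_id
  have hint : ∀ i ∈ s, Integrable (fun ω => g i (τ ω) * X i ω) μ :=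
    fun i hi => (hind i hi).integrable_mul (hgτ i hi) (hX i hi)
  rw [integral_add hhτ (integrable_finsetSum _ hint), integral_finsetSum _ hint]
  exact congrArg _ <| Finset.sum_congr rfl fun i hi =>
    (hind i hi).integral_fun_mul_eq_mul_integral (hgτ i hi).1 (hX i hi).1

lemma integral_sq_add_sum_mul_of_indepFun (hτX : ∀ i ∈ s, IndepFun τ (X i) μ)
    (hpair : ∀ i ∈ s, ∀ j ∈ s, i ≠ j → IndepFun (fun ω => (τ ω, X i ω)) (X j) μ)
    (hg : ∀ i ∈ s, Measurable (g i)) (hh : Measurable h)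
    (hgτ : ∀ i ∈ s, MemLp (fun ω => g i (τ ω)) 2 μ)
    (hhτ : MemLp (fun ω => h (τ ω)) 2 μ) (hX : ∀ i ∈ s, MemLp (X i) 2 μ)
    (hX0 : ∀ i ∈ s, ∫ ω, X i ω ∂μ = 0) :
    ∫ ω, (h (τ ω) + ∑ i ∈ s, g i (τ ω) * X i ω) ^ 2 ∂μ =
      ∫ ω, h (τ ω) ^ 2 ∂μ +
        ∑ i ∈ s, (∫ ω, g i (τ ω) ^ 2 ∂μ) * ∫ ω, X i ω ^ 2 ∂μ := by
  set u : ι → Ω → ℝ := fun i ω => g i (τ ω) * X i ω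
  have hu : ∀ i ∈ s, MemLp (u i) 2 μ := fun i hi =>
    ((hτX i hi).comp (hg i hi) measurable_id).memLp_two_mul (hgτ i hi) (hX i hi)
  have hsum : MemLp (fun ω => ∑ i ∈ s, u i ω) 2 μ := memLp_finsetSum s hu
  have hzero : ∀ j ∈ s, ∀ V : Ω → ℝ, IndepFun V (X j) μ → AEStronglyMeasurable V μ →
      ∫ ω, V ω * X j ω ∂μ = 0 := fun j hj V hV hVm => by
    rw [hV.integral_fun_mul_eq_mul_integral hVm (hX j hj).1, hX0 j hj, mul_zero]
  have hcross : ∫ ω, h (τ ω) * ∑ i ∈ s, u i ω ∂μ = 0 := by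
    simp_rw [Finset.mul_sum]
    rw [integral_finsetSum (f := fun i ω => h (τ ω) * u i ω) _
      fun i hi => hhτ.integrable_mul (hu i hi)]
    refine Finset.sum_eq_zero fun i hi => ?_
    have hV : IndepFun (fun ω => h (τ ω) * g i (τ ω)) (X i) μ :=
      (hτX i hi).comp (hh.mul (hg i hi)) measurable_id
    simpa only [u, mul_assoc] using hzero i hi _ hV (hhτ.1.mul (hgτ i hi).1)
  have horth : ∀ i ∈ s, ∀ j ∈ s, i ≠ j → ∫ ω, u i ω * u j ω ∂μ = 0 := by
    intro i hi j hj hij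
    have hφ : Measurable fun p : ℝ × ℝ => g i p.1 * p.2 * g j p.1 :=
      ((hg i hi).comp measurable_fst |>.mul measurable_snd).mul ((hg j hj).comp measurable_fst)
    have hV : IndepFun (fun ω => g i (τ ω) * X i ω * g j (τ ω)) (X j) μ :=
      (hpair i hi j hj hij).comp hφ measurable_id
    simpa only [u, mul_assoc] using hzero j hj _ hV ((hu i hi).1.mul (hgτ j hj).1)
  have hsq :
      ∀ i ∈ s, ∫ ω, u i ω ^ 2 ∂μ = (∫ ω, g i (τ ω) ^ 2 ∂μ) * ∫ ω, X i ω ^ 2 ∂μ := by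
    intro i hi
    have hV : IndepFun (fun ω => g i (τ ω) ^ 2) (fun ω => X i ω ^ 2) μ :=
      (hτX i hi).comp ((hg i hi).pow_const 2) (measurable_id.pow_const 2)
    simpa only [u, mul_pow] using
      hV.integral_fun_mul_eq_mul_integral ((hgτ i hi).1.pow 2) ((hX i hi).1.pow 2)
  rw [integral_add_sq_of_integral_mul_eq_zero hhτ hsum hcross,
    integral_sq_sum_of_orthogonal hu horth, Finset.sum_congr rfl hsq]

end Orthogonality

section Uniform

variable {Ω : Type*} [MeasurableSpace Ω] {μ : Measure Ω} {τ : Ω → ℝ} {F : ℝ → ℝ}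

lemma memLp_comp_of_map_eq_restrict_Icc [IsFiniteMeasure μ]
    (hτ : μ.map τ = volume.restrict (Icc 0 1)) (hF : Continuous F) (p : ℝ≥0∞) :
    MemLp (fun ω => F (τ ω)) p μ := by
  have hτm : AEMeasurable τ μ := .of_map_ne_zero (by simp [hτ])
  obtain ⟨C, hC⟩ := isCompact_Icc.exists_bound_of_continuousOn hF.continuousOn
  have hFτ : MemLp F ∞ (μ.map τ) := hτ ▸ memLp_top_of_bound hF.aestronglyMeasurable C
    ((ae_restrict_iff' measurableSet_Icc).2 (ae_of_all _ hC))
  exact ((memLp_map_measure_iff hF.aestronglyMeasurable hτm).1 hFτ).mono_exponent le_top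

lemma integral_comp_of_map_eq_restrict_Icc (hτ : μ.map τ = volume.restrict (Icc 0 1))
    (hF : Continuous F) : ∫ ω, F (τ ω) ∂μ = ∫ x in (0 : ℝ)..1, F x := by
  have hτm : AEMeasurable τ μ := .of_map_ne_zero (by simp [hτ])
  rw [← integral_map hτm hF.aestronglyMeasurable, hτ, integral_Icc_eq_integral_Ioc,
    intervalIntegral.integral_of_le zero_le_one]

lemma integral_zero_one_quartic (a b c d e : ℝ) :
    ∫ x in (0 : ℝ)..1, (a * x ^ 4 + b * x ^ 3 + c * x ^ 2 + d * x + e) =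
      a / 5 + b / 4 + c / 3 + d / 2 + e := by
  have hint : ∀ f : ℝ → ℝ, Continuous f → IntervalIntegrable f volume 0 1 :=
    fun f hf => hf.intervalIntegrable 0 1
  rw [intervalIntegral.integral_add (hint _ (by fun_prop)) (hint _ (by fun_prop)),
    intervalIntegral.integral_add (hint _ (by fun_prop)) (hint _ (by fun_prop)),
    intervalIntegral.integral_add (hint _ (by fun_prop)) (hint _ (by fun_prop)),
    intervalIntegral.integral_add (hint _ (by fun_prop)) (hint _ (by fun_prop))]
  simp only [intervalIntegral.integral_const_mul, integral_pow, intervalIntegral.integral_const]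
  rw [intervalIntegral.integral_const_mul, integral_id]
  ring

lemma integral_comp_of_map_eq_restrict_Icc_of_quartic (hτ : μ.map τ = volume.restrict (Icc 0 1))
    (a b c d e : ℝ) (hF : ∀ x, F x = a * x ^ 4 + b * x ^ 3 + c * x ^ 2 + d * x + e) :
    ∫ ω, F (τ ω) ∂μ = a / 5 + b / 4 + c / 3 + d / 2 + e := by
  have hFeq : F = fun x => a * x ^ 4 + b * x ^ 3 + c * x ^ 2 + d * x + e := funext hF
  rw [integral_comp_of_map_eq_restrict_Icc hτ (hFeq ▸ by fun_prop), hFeq,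
    integral_zero_one_quartic]

end Uniform

section Exponential

lemma expMeasure_eq_withDensity (r : ℝ) :
    expMeasure r =
      (volume.restrict (Ici 0)).withDensity fun x => ENNReal.ofReal (r * exp (-(r * x))) := by
  rw [← withDensity_indicator measurableSet_Ici, expMeasure, gammaMeasure]
  congr 1
  funext x
  simp only [gammaPDF_eq, indicator_apply, mem_Ici]
  split_ifs <;> simp_all

lemma integral_pow_expMeasure {r : ℝ} (hr : 0 < r) (n : ℕ) :
    ∫ x, x ^ n ∂expMeasure r = n ! / r ^ n := by
  rw [expMeasure_eq_withDensity, integral_withDensity_eq_integral_toReal_smul (by fun_prop)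
    (ae_of_all _ fun _ => ENNReal.ofReal_lt_top), integral_Ici_eq_integral_Ioi]
  have hdens : ∀ t ∈ Ioi (0 : ℝ), (ENNReal.ofReal (r * exp (-(r * t)))).toReal • t ^ n =
      r * (t ^ ((n + 1 : ℝ) - 1) * exp (-(r * t))) := fun t _ => by
    rw [ENNReal.toReal_ofReal (by positivity), smul_eq_mul, add_sub_cancel_right, rpow_natCast]
    ring
  rw [setIntegral_congr_fun measurableSet_Ioi hdens, integral_const_mul,
    integral_rpow_mul_exp_neg_mul_Ioi (by positivity) hr, Gamma_nat_eq_factorial, ← Nat.cast_succ,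
    rpow_natCast, one_div, inv_pow, pow_succ]
  field_simp

lemma integrable_pow_expMeasure {r : ℝ} (hr : 0 < r) (n : ℕ) :
    Integrable (fun x => x ^ n) (expMeasure r) :=
  .of_integral_ne_zero (by rw [integral_pow_expMeasure hr]; positivity)

lemma centered_moments_of_map_eq_expMeasure {Ω : Type*} [MeasurableSpace Ω] {μ : Measure Ω}
    [IsProbabilityMeasure μ] {T : Ω → ℝ} {r : ℝ} (hr : 0 < r) (hT : μ.map T = expMeasure r) :
    MemLp (fun ω => T ω - r⁻¹) 2 μ ∧ ∫ ω, (T ω - r⁻¹) ∂μ = 0 ∧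
      ∫ ω, (T ω - r⁻¹) ^ 2 ∂μ = r⁻¹ ^ 2 := by
  have := isProbabilityMeasure_expMeasure hr
  have hTm : AEMeasurable T μ := .of_map_ne_zero (hT ▸ IsProbabilityMeasure.ne_zero _)
  have h1 : Integrable (fun x => x) (expMeasure r) := by simpa using integrable_pow_expMeasure hr 1
  have h2 := integrable_pow_expMeasure hr 2
  have m1 : ∫ x, x ∂expMeasure r = r⁻¹ := by simpa using integral_pow_expMeasure hr 1
  have m2 : ∫ x, x ^ 2 ∂expMeasure r = 2 / r ^ 2 := by simpa using integral_pow_expMeasure hr 2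
  have hsq : ∀ x : ℝ, (x - r⁻¹) ^ 2 = x ^ 2 - 2 * r⁻¹ * x + r⁻¹ ^ 2 := fun x => by ring
  have h21 : Integrable (fun x => x ^ 2 - 2 * r⁻¹ * x) (expMeasure r) := h2.sub (h1.const_mul _)
  have hL2 : MemLp (fun x : ℝ => x - r⁻¹) 2 (expMeasure r) := by
    refine (memLp_two_iff_integrable_sq (by fun_prop)).2 ?_
    simp_rw [hsq]
    exact h21.add (integrable_const _)
  refine ⟨(memLp_map_measure_iff (g := fun x => x - r⁻¹) (by fun_prop) hTm).1 (hT ▸ hL2),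
    ?_, ?_⟩
  · rw [← integral_map (f := fun x => x - r⁻¹) hTm (by fun_prop), hT,
      integral_sub h1 (integrable_const _), m1, integral_const]
    simp
  · rw [← integral_map (f := fun x => (x - r⁻¹) ^ 2) hTm (by fun_prop), hT]
    simp_rw [hsq]
    rw [integral_add h21 (integrable_const _), integral_sub h2 (h1.const_mul _), integral_const_mul,
      m1, m2, integral_const, probReal_univ, one_smul]
    field_simp
    ring

end Exponential

section FixedPoint

/- After centring `T` and `T'`, the summands of the right-hand side are indexed by
`fixedPointIndex`; index `2` of `fixedPointFamily` is `τ` itself and carries no weight. -/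

noncomputable def fixedPointWeight : Fin 5 → ℝ → ℝ :=
  ![fun x => x ^ 2, fun x => (1 - x) ^ 2, 0, fun x => x ^ 2 / 2, fun x => (1 - x) ^ 2 / 2]

noncomputable def fixedPointDrift (x : ℝ) : ℝ := x ^ 2 / 4 + (1 - x) ^ 2 / 4 - x * (1 - x)

noncomputable def fixedPointFamily {Ω : Type*} (Y' Y'' τ T T' : Ω → ℝ) :
    Fin 5 → Ω → ℝ :=
  ![Y', Y'', τ, fun ω => T ω - 2⁻¹, fun ω => T' ω - 2⁻¹]

def fixedPointIndex : Finset (Fin 5) := {0, 1, 3, 4}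

lemma sum_fixedPointIndex {M : Type*} [AddCommMonoid M] (f : Fin 5 → M) :
    ∑ i ∈ fixedPointIndex, f i = f 0 + f 1 + f 3 + f 4 := by
  simp [fixedPointIndex, add_assoc]

lemma forall_mem_fixedPointIndex {p : Fin 5 → Prop} :
    (∀ i ∈ fixedPointIndex, p i) ↔ p 0 ∧ p 1 ∧ p 3 ∧ p 4 := by
  simp [fixedPointIndex]

lemma two_ne_of_mem_fixedPointIndex {i : Fin 5} (hi : i ∈ fixedPointIndex) : (2 : Fin 5) ≠ i :=
  fun h => absurd (h ▸ hi) (by decide)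

lemma continuous_fixedPointWeight (i : Fin 5) : Continuous (fixedPointWeight i) := by
  fin_cases i <;>
    simp only [fixedPointWeight, Fin.zero_eta, Fin.mk_one, Fin.reduceFinMk, Matrix.cons_val_zero,
      Matrix.cons_val_one, Matrix.cons_val] <;>
    fun_prop

lemma continuous_fixedPointDrift : Continuous fixedPointDrift := by
  unfold fixedPointDrift
  fun_prop

lemma fixedPoint_eq_sum {Ω : Type*} (Y' Y'' τ T T' : Ω → ℝ) (ω : Ω) :
    τ ω ^ 2 * Y' ω + (1 - τ ω) ^ 2 * Y'' ω + (1 / 2) * τ ω ^ 2 * T ω +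
        (1 / 2) * (1 - τ ω) ^ 2 * T' ω - τ ω * (1 - τ ω) =
      fixedPointDrift (τ ω) + ∑ i ∈ fixedPointIndex,
        fixedPointWeight i (τ ω) * fixedPointFamily Y' Y'' τ T T' i ω := by
  rw [sum_fixedPointIndex]
  simp only [fixedPointWeight, fixedPointFamily, fixedPointDrift, Matrix.cons_val]
  ring

variable {Ω : Type*} [MeasurableSpace Ω] {μ : Measure Ω} {Y' Y'' τ T T' : Ω → ℝ}

lemma iIndepFun_fixedPointFamily (hindep : iIndepFun ![Y', Y'', τ, T, T'] μ) :
    iIndepFun (fixedPointFamily Y' Y'' τ T T') μ := by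
  convert hindep.comp ![id, id, id, (· - 2⁻¹), (· - 2⁻¹)] (fun i => by
    fin_cases i
    exacts [measurable_id, measurable_id, measurable_id, measurable_id.sub_const _,
      measurable_id.sub_const _]) using 1
  funext i
  fin_cases i <;> rfl

variable [IsProbabilityMeasure μ]

lemma integral_fixedPointMap (hindep : iIndepFun ![Y', Y'', τ, T, T'] μ)
    (hτ : μ.map τ = volume.restrict (Icc 0 1)) (hT : μ.map T = expMeasure 2)
    (hT' : μ.map T' = expMeasure 2) (hY' : Integrable Y' μ) (hY'' : Integrable Y'' μ) :
    ∫ ω, (τ ω ^ 2 * Y' ω + (1 - τ ω) ^ 2 * Y'' ω + (1 / 2) * τ ω ^ 2 * T ω +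
        (1 / 2) * (1 - τ ω) ^ 2 * T' ω - τ ω * (1 - τ ω)) ∂μ =
      (∫ ω, Y' ω ∂μ + ∫ ω, Y'' ω ∂μ) / 3 := by
  obtain ⟨hS, hS0, -⟩ := centered_moments_of_map_eq_expMeasure two_pos hT
  obtain ⟨hS', hS'0, -⟩ := centered_moments_of_map_eq_expMeasure two_pos hT'
  have hX : ∀ i ∈ fixedPointIndex, Integrable (fixedPointFamily Y' Y'' τ T T' i) μ :=
    forall_mem_fixedPointIndex.2
      ⟨hY', hY'', hS.integrable one_le_two, hS'.integrable one_le_two⟩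
  simp_rw [fixedPoint_eq_sum]
  rw [integral_add_sum_mul_of_indepFun (τ := τ)
    (fun i hi => (iIndepFun_fixedPointFamily hindep).indepFun (two_ne_of_mem_fixedPointIndex hi))
    (fun i _ => (continuous_fixedPointWeight i).measurable)
    (fun i _ => (memLp_comp_of_map_eq_restrict_Icc hτ (continuous_fixedPointWeight i) 1).integrable
      le_rfl) hX
    ((memLp_comp_of_map_eq_restrict_Icc hτ continuous_fixedPointDrift 1).integrable le_rfl),
    sum_fixedPointIndex]
  have hdrift : ∫ ω, fixedPointDrift (τ ω) ∂μ = 0 :=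
    (integral_comp_of_map_eq_restrict_Icc_of_quartic hτ 0 0 (3 / 2) (-3 / 2) (1 / 4)
      fun x => by unfold fixedPointDrift; ring).trans (by norm_num)
  have hw0 : ∫ ω, τ ω ^ 2 ∂μ = 1 / 3 :=
    (integral_comp_of_map_eq_restrict_Icc_of_quartic hτ (F := fun x => x ^ 2) 0 0 1 0 0
      fun x => by ring).trans (by norm_num)
  have hw1 : ∫ ω, (1 - τ ω) ^ 2 ∂μ = 1 / 3 :=
    (integral_comp_of_map_eq_restrict_Icc_of_quartic hτ (F := fun x => (1 - x) ^ 2) 0 0 1 (-2) 1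
      fun x => by ring).trans (by norm_num)
  simp only [fixedPointWeight, fixedPointFamily, Matrix.cons_val]
  rw [hdrift, hw0, hw1, hS0, hS'0]
  ring

lemma integral_sq_fixedPointMap (hindep : iIndepFun ![Y', Y'', τ, T, T'] μ)
    (hτ : μ.map τ = volume.restrict (Icc 0 1)) (hT : μ.map T = expMeasure 2)
    (hT' : μ.map T' = expMeasure 2) (hY' : MemLp Y' 2 μ) (hY'' : MemLp Y'' 2 μ)
    (hY'0 : ∫ ω, Y' ω ∂μ = 0) (hY''0 : ∫ ω, Y'' ω ∂μ = 0) :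
    ∫ ω, (τ ω ^ 2 * Y' ω + (1 - τ ω) ^ 2 * Y'' ω + (1 / 2) * τ ω ^ 2 * T ω +
        (1 / 2) * (1 - τ ω) ^ 2 * T' ω - τ ω * (1 - τ ω)) ^ 2 ∂μ =
      3 / 80 + (∫ ω, Y' ω ^ 2 ∂μ + ∫ ω, Y'' ω ^ 2 ∂μ) / 5 := by
  obtain ⟨hS, hS0, hS2⟩ := centered_moments_of_map_eq_expMeasure two_pos hT
  obtain ⟨hS', hS'0, hS'2⟩ := centered_moments_of_map_eq_expMeasure two_pos hT'
  have hτm : AEMeasurable τ μ := .of_map_ne_zero (by simp [hτ])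
  have hmeas : ∀ i, AEMeasurable (fixedPointFamily Y' Y'' τ T T' i) μ := by
    intro i
    fin_cases i
    exacts [hY'.1.aemeasurable, hY''.1.aemeasurable, hτm, hS.1.aemeasurable, hS'.1.aemeasurable]
  have hind := iIndepFun_fixedPointFamily hindep
  simp_rw [fixedPoint_eq_sum]
  rw [integral_sq_add_sum_mul_of_indepFun (τ := τ)
    (fun i hi => hind.indepFun (two_ne_of_mem_fixedPointIndex hi))
    (fun i _ j hj hij => hind.indepFun_prodMk₀ hmeas 2 i j (two_ne_of_mem_fixedPointIndex hj) hij)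
    (fun i _ => (continuous_fixedPointWeight i).measurable) continuous_fixedPointDrift.measurable
    (fun i _ => memLp_comp_of_map_eq_restrict_Icc hτ (continuous_fixedPointWeight i) 2)
    (memLp_comp_of_map_eq_restrict_Icc hτ continuous_fixedPointDrift 2)
    (forall_mem_fixedPointIndex.2 ⟨hY', hY'', hS, hS'⟩)
    (forall_mem_fixedPointIndex.2 ⟨hY'0, hY''0, hS0, hS'0⟩),
    sum_fixedPointIndex]
  have hdrift : ∫ ω, fixedPointDrift (τ ω) ^ 2 ∂μ = 1 / 80 :=
    (integral_comp_of_map_eq_restrict_Icc_of_quartic hτ (F := fun x => fixedPointDrift x ^ 2)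
      (9 / 4) (-9 / 2) 3 (-3 / 4) (1 / 16) fun x => by unfold fixedPointDrift; ring).trans
      (by norm_num)
  have hw0 : ∫ ω, (τ ω ^ 2) ^ 2 ∂μ = 1 / 5 :=
    (integral_comp_of_map_eq_restrict_Icc_of_quartic hτ (F := fun x => (x ^ 2) ^ 2) 1 0 0 0 0
      fun x => by ring).trans (by norm_num)
  have hw1 : ∫ ω, ((1 - τ ω) ^ 2) ^ 2 ∂μ = 1 / 5 :=
    (integral_comp_of_map_eq_restrict_Icc_of_quartic hτ (F := fun x => ((1 - x) ^ 2) ^ 2)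
      1 (-4) 6 (-4) 1 fun x => by ring).trans (by norm_num)
  have hw3 : ∫ ω, (τ ω ^ 2 / 2) ^ 2 ∂μ = 1 / 20 :=
    (integral_comp_of_map_eq_restrict_Icc_of_quartic hτ (F := fun x => (x ^ 2 / 2) ^ 2)
      (1 / 4) 0 0 0 0 fun x => by ring).trans (by norm_num)
  have hw4 : ∫ ω, ((1 - τ ω) ^ 2 / 2) ^ 2 ∂μ = 1 / 20 :=
    (integral_comp_of_map_eq_restrict_Icc_of_quartic hτ (F := fun x => ((1 - x) ^ 2 / 2) ^ 2)
      (1 / 4) (-1) (3 / 2) (-1) (1 / 4) fun x => by ring).trans (by norm_num)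
  simp only [fixedPointWeight, fixedPointFamily, Matrix.cons_val]
  rw [hdrift, hw0, hw1, hw3, hw4, hS2, hS'2]
  ring

end FixedPoint

theorem stmt19 {Ω : Type*} [MeasurableSpace Ω] (μ : Measure Ω) [IsProbabilityMeasure μ]
    (Y Y' Y'' τ T T' : Ω → ℝ)
    (hY' : IdentDistrib Y' Y μ μ) (hY'' : IdentDistrib Y'' Y μ μ)
    (hindep : iIndepFun ![Y', Y'', τ, T, T'] μ)
    (hτ : μ.map τ = volume.restrict (Set.Icc (0 : ℝ) 1))
    (hT : μ.map T = expMeasure 2) (hT' : μ.map T' = expMeasure 2)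
    (hY2 : MemLp Y 2 μ)
    (hfix : IdentDistrib Y
      (fun ω => τ ω ^ 2 * Y' ω + (1 - τ ω) ^ 2 * Y'' ω +
        (1 / 2) * τ ω ^ 2 * T ω + (1 / 2) * (1 - τ ω) ^ 2 * T' ω - τ ω * (1 - τ ω)) μ μ) :
    (∫ ω, Y ω ∂μ = 0) ∧ variance Y μ = 1 / 16 := by
  have hY'L2 : MemLp Y' 2 μ := hY'.symm.memLp_snd hY2
  have hY''L2 : MemLp Y'' 2 μ := hY''.symm.memLp_snd hY2
  have hmean : ∫ ω, Y ω ∂μ = 0 := by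
    have h := integral_fixedPointMap hindep hτ hT hT' (hY'L2.integrable one_le_two)
      (hY''L2.integrable one_le_two)
    rw [hY'.integral_eq, hY''.integral_eq, ← hfix.integral_eq] at h
    linarith
  have hsq_eq {X Z : Ω → ℝ} (h : IdentDistrib X Z μ μ) : ∫ ω, X ω ^ 2 ∂μ = ∫ ω, Z ω ^ 2 ∂μ :=
    (h.comp (measurable_id.pow_const 2)).integral_eq
  have hsq := integral_sq_fixedPointMap hindep hτ hT hT' hY'L2 hY''L2
    (hY'.integral_eq.trans hmean) (hY''.integral_eq.trans hmean)
  rw [hsq_eq hY', hsq_eq hY'', ← hsq_eq hfix] at hsq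
  refine ⟨hmean, ?_⟩
  rw [variance_of_integral_eq_zero hfix.aemeasurable_fst hmean]
  linarith
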